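/- Let n : ℕ. The map v ↦ (2·x, 2·y, 2·u, 2·t), where x, y, u, t are the four real coordinate vectors of v, is a homeomorphism from the subspace S := {v : Fin (n+1) → ℍ | ∑ a, normSq (v a) = 1 and ν(v) = 0} of Fin (n+1) → ℍ (with the product topology) onto the real Stiefel manifold T := {(a, b, c, d) : (Fin (n+1) → ℝ)⁴ | a, b, c, d are pairwise orthogonal for the Euclidean dot product and each has Euclidean norm 1} of orthonormal 4-frames in ℝ^{n+1}. (This realizes the Stiefel manifold Ṽ₄(ℝ^{n+1}) as the sphere-level zero set of the Sp(1)-moment map, as in Theorem 3.2 (ii) and Corollary 3.3.) -/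

import Mathlib

open Quaternion Finset

/-- The imaginary units `i`, `j`, `k` of the quaternions. -/
noncomputable def qi : Quaternion ℝ := ⟨0, 1, 0, 0⟩
noncomputable def qj : Quaternion ℝ := ⟨0, 0, 1, 0⟩
noncomputable def qk : Quaternion ℝ := ⟨0, 0, 0, 1⟩

/-- The sphere-level zero set of the `Sp(1)`-moment map `ν`. -/
def Sset (n : ℕ) : Set (Fin (n + 1) → Quaternion ℝ) :=
  {v | (∑ a, Quaternion.normSq (v a)) = 1 ∧
    (∑ a, star (v a) * qi * v a) = 0 ∧ (∑ a, star (v a) * qj * v a) = 0 ∧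
    (∑ a, star (v a) * qk * v a) = 0}

/-- The real Stiefel manifold of orthonormal 4-frames in `ℝ^{n+1}`. -/
def Tset (n : ℕ) :
    Set ((Fin (n + 1) → ℝ) × (Fin (n + 1) → ℝ) × (Fin (n + 1) → ℝ) × (Fin (n + 1) → ℝ)) :=
  {p | (∑ a, p.1 a * p.2.1 a) = 0 ∧ (∑ a, p.1 a * p.2.2.1 a) = 0 ∧
    (∑ a, p.1 a * p.2.2.2 a) = 0 ∧ (∑ a, p.2.1 a * p.2.2.1 a) = 0 ∧
    (∑ a, p.2.1 a * p.2.2.2 a) = 0 ∧ (∑ a, p.2.2.1 a * p.2.2.2 a) = 0 ∧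
    (∑ a, p.1 a ^ 2) = 1 ∧ (∑ a, p.2.1 a ^ 2) = 1 ∧
    (∑ a, p.2.2.1 a ^ 2) = 1 ∧ (∑ a, p.2.2.2 a ^ 2) = 1}

/-!
Writing `q = x + y i + u j + t k`, the quaternions `q̄ i q`, `q̄ j q`, `q̄ k q` are purely imaginary
with components quadratic in `(x, y, u, t)`. Summed over the coordinates of `v`, the nine
components of `ν(v) = 0` together with `∑ |v a|² = 1` are ten linear equations in the ten Gram
sums of the coordinate vectors `x, y, u, t`, whose unique solution is the Gram matrix `I / 4`.
Hence the linear automorphism `v ↦ 2 (x, y, u, t)` of `ℝ^{4(n+1)}`, a homeomorphism, maps `S`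
exactly onto `T`.
-/

namespace Quaternion

variable {ι R : Type*} [CommRing R] (s : Finset ι) (f : ι → ℍ[R])

@[simp] theorem re_sum : (∑ a ∈ s, f a).re = ∑ a ∈ s, (f a).re :=
  map_sum (QuaternionAlgebra.reₗ (-1) 0 (-1)) f s
@[simp] theorem imI_sum : (∑ a ∈ s, f a).imI = ∑ a ∈ s, (f a).imI :=
  map_sum (QuaternionAlgebra.imIₗ (-1) 0 (-1)) f s
@[simp] theorem imJ_sum : (∑ a ∈ s, f a).imJ = ∑ a ∈ s, (f a).imJ :=
  map_sum (QuaternionAlgebra.imJₗ (-1) 0 (-1)) f s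
@[simp] theorem imK_sum : (∑ a ∈ s, f a).imK = ∑ a ∈ s, (f a).imK :=
  map_sum (QuaternionAlgebra.imKₗ (-1) 0 (-1)) f s

end Quaternion

theorem star_mul_qi_mul (q : ℍ) :
    star q * qi * q = ⟨0, q.re ^ 2 + q.imI ^ 2 - q.imJ ^ 2 - q.imK ^ 2,
      2 * (q.imI * q.imJ - q.re * q.imK), 2 * (q.re * q.imJ + q.imI * q.imK)⟩ := by
  ext <;> simp only [re_mul, imI_mul, imJ_mul, imK_mul] <;> simp [qi] <;> ring

theorem star_mul_qj_mul (q : ℍ) :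
    star q * qj * q = ⟨0, 2 * (q.imI * q.imJ + q.re * q.imK),
      q.re ^ 2 - q.imI ^ 2 + q.imJ ^ 2 - q.imK ^ 2, 2 * (q.imJ * q.imK - q.re * q.imI)⟩ := by
  ext <;> simp only [re_mul, imI_mul, imJ_mul, imK_mul] <;> simp [qj] <;> ring

theorem star_mul_qk_mul (q : ℍ) :
    star q * qk * q = ⟨0, 2 * (q.imI * q.imK - q.re * q.imJ),
      2 * (q.re * q.imI + q.imJ * q.imK), q.re ^ 2 - q.imI ^ 2 - q.imJ ^ 2 + q.imK ^ 2⟩ := by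
  ext <;> simp only [re_mul, imI_mul, imJ_mul, imK_mul] <;> simp [qk] <;> ring

noncomputable def doubledCoords {ι : Type*} :
    (ι → ℍ) ≃ₗ[ℝ] (ι → ℝ) × (ι → ℝ) × (ι → ℝ) × (ι → ℝ) where
  toFun v := (fun a => 2 * (v a).re, fun a => 2 * (v a).imI,
    fun a => 2 * (v a).imJ, fun a => 2 * (v a).imK)
  invFun p a := ⟨p.1 a / 2, p.2.1 a / 2, p.2.2.1 a / 2, p.2.2.2 a / 2⟩
  map_add' v w := by ext <;> simp [mul_add]
  map_smul' c v := by ext <;> simp [mul_left_comm]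
  left_inv v := by ext <;> simp
  right_inv p := by ext <;> simp [mul_div_cancel₀]

theorem doubledCoords_apply {ι : Type*} (v : ι → ℍ) :
    doubledCoords v = (fun a => 2 * (v a).re, fun a => 2 * (v a).imI,
      fun a => 2 * (v a).imJ, fun a => 2 * (v a).imK) :=
  rfl

theorem Sset_eq_preimage_doubledCoords (n : ℕ) : Sset n = doubledCoords ⁻¹' Tset n := by
  ext v
  simp only [Sset, Tset, Set.mem_preimage, Set.mem_ofPred_eq, doubledCoords_apply, normSq_def',
    Quaternion.ext_iff, re_sum, imI_sum, imJ_sum, imK_sum]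
  simp only [star_mul_qi_mul, star_mul_qj_mul, star_mul_qk_mul, re_zero, imI_zero, imJ_zero,
    imK_zero, Finset.sum_const_zero, true_and, ← Finset.mul_sum, Finset.sum_add_distrib,
    Finset.sum_sub_distrib, show ∀ x y : ℝ, 2 * x * (2 * y) = 4 * (x * y) by intros; ring,
    show ∀ x : ℝ, (2 * x) ^ 2 = 4 * x ^ 2 by intros; ring]
  constructor
  · rintro ⟨h, ⟨hi₁, hi₂, hi₃⟩, ⟨hj₁, hj₂, hj₃⟩, ⟨hk₁, hk₂, hk₃⟩⟩
    refine ⟨?_, ?_, ?_, ?_, ?_, ?_, ?_, ?_, ?_, ?_⟩ <;> linarith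
  · rintro ⟨h₁, h₂, h₃, h₄, h₅, h₆, h₇, h₈, h₉, h₁₀⟩
    refine ⟨?_, ⟨?_, ?_, ?_⟩, ⟨?_, ?_, ?_⟩, ⟨?_, ?_, ?_⟩⟩ <;> linarith

/-- The map `v ↦ (2x, 2y, 2u, 2t)` on the four real coordinate vectors of `v` is a
homeomorphism from the sphere-level zero set of the `Sp(1)`-moment map onto the real
Stiefel manifold `Ṽ₄(ℝ^{n+1})`. -/
theorem stmt_5 (n : ℕ) :
    ∃ e : Sset n ≃ₜ Tset n,
      ∀ v : Sset n,
        (e v : (Fin (n + 1) → ℝ) × (Fin (n + 1) → ℝ) × (Fin (n + 1) → ℝ) × (Fin (n + 1) → ℝ)) =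
          (fun a => 2 * (v.1 a).re, fun a => 2 * (v.1 a).imI,
            fun a => 2 * (v.1 a).imJ, fun a => 2 * (v.1 a).imK) :=
  ⟨doubledCoords.toContinuousLinearEquiv.toHomeomorph.sets (Sset_eq_preimage_doubledCoords n),
    fun _ => rfl⟩
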